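/- arXiv:2108.03504 — 6 statements merged into one kernel-verified Lean document; each statement's English description precedes it below -/
import Mathlib

section
/- For λ ⊆ [n] with |λ| = k, the affine permutation f_{min,λ} defined by f(i) = i + n if i mod n ∈ λ and f(i) = i otherwise, is bounded, has av(f_{min,λ}) = k, and has length ℓ(f_{min,λ}) = k(n−k). -/
/-- The number of equivalence classes of inversions of an affine permutation,
counted via the canonical representatives whose first coordinate lies in `[1,n]`. -/
noncomputable def alen (n : ℕ) (f : ℤ → ℤ) : ℕ :=
  Set.ncard {p : ℤ × ℤ | 1 ≤ p.1 ∧ p.1 ≤ n ∧ p.1 < p.2 ∧ f p.2 < f p.1}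

/-!
`f_{min,λ}` moves every position whose residue lies in `λ` up by exactly `n` and fixes the
others, so it is bounded, its inverse moves the same positions down by `n`, and the
displacements over one period sum to `n k`. If `i ∈ [1, n]` and `i < j`, then `(i, j)` is an
inversion exactly when `i ∈ λ`, the residue of `j` is not in `λ`, and `j < i + n`. An integer
in the window `(i, i + n)` is determined by its residue, and every residue other than `i` occurs
there, so `(i, j) ↦ (i, j mod n)` is a bijection from these inversions onto
`λ × ([n] \ λ)`, which has `k (n - k)` elements.
-/

namespace AffinePermutation

/-- The representative of `i` modulo `n` in `[1, n]` (for `n = 0` it is `i` itself). -/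
def residue (n : ℕ) (i : ℤ) : ℤ := (i - 1) % n + 1

def fmin (n : ℕ) (lam : Finset ℤ) (i : ℤ) : ℤ := if residue n i ∈ lam then i + n else i

variable {n : ℕ}

theorem residue_add_self (i : ℤ) : residue n (i + n) = residue n i := by
  simp only [residue, add_sub_right_comm, Int.add_emod_right]

theorem residue_sub_self (i : ℤ) : residue n (i - n) = residue n i := by
  rw [← residue_add_self, sub_add_cancel]

theorem residue_of_mem_Icc {i : ℤ} (h₁ : 1 ≤ i) (h₂ : i ≤ n) : residue n i = i := by
  rw [residue, Int.emod_eq_of_lt (by omega) (by omega), sub_add_cancel]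

theorem residue_mem_Icc (hn : 0 < n) (i : ℤ) : residue n i ∈ Finset.Icc 1 (n : ℤ) := by
  have h₀ := Int.emod_nonneg (i - 1) (by omega : (n : ℤ) ≠ 0)
  have h₁ := Int.emod_lt_of_pos (i - 1) (by omega : (0 : ℤ) < n)
  rw [Finset.mem_Icc, residue]
  omega

theorem residue_injOn_Ioo (i : ℤ) : Set.InjOn (residue n) (Set.Ioo i (i + n)) := by
  intro a ⟨ha₁, ha₂⟩ b ⟨hb₁, hb₂⟩ hab
  have hmod : (a - 1) ≡ (b - 1) [ZMOD n] := add_right_cancel hab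
  have hzero := Int.eq_zero_of_abs_lt_dvd hmod.dvd (abs_lt.mpr ⟨by omega, by omega⟩)
  omega

variable (n) (lam : Finset ℤ)

theorem fmin_add_self (i : ℤ) : fmin n lam (i + n) = fmin n lam i + n := by
  simp only [fmin, residue_add_self]
  split_ifs <;> rfl

theorem le_fmin (i : ℤ) : i ≤ fmin n lam i := by
  unfold fmin; split_ifs <;> omega

theorem fmin_le (i : ℤ) : fmin n lam i ≤ i + n := by
  unfold fmin; split_ifs <;> omega

theorem fmin_bijective : Function.Bijective (fmin n lam) := by
  refine Function.bijective_iff_has_inverse.mpr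
    ⟨fun j => if residue n j ∈ lam then j - n else j, fun i => ?_, fun j => ?_⟩
  · by_cases h : residue n i ∈ lam <;> simp [fmin, h, residue_add_self]
  · by_cases h : residue n j ∈ lam <;> simp [fmin, h, residue_sub_self]

variable {n lam}

theorem fmin_lt_fmin_iff {i j : ℤ} (hij : i < j) :
    fmin n lam j < fmin n lam i ↔ residue n i ∈ lam ∧ residue n j ∉ lam ∧ j < i + n := by
  unfold fmin; split_ifs <;> simp_all <;> omega

theorem sum_fmin_sub_self (hlam : lam ⊆ Finset.Icc 1 (n : ℤ)) :
    ∑ i ∈ Finset.Icc (1 : ℤ) n, (fmin n lam i - i) = n * lam.card := by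
  have hterm : ∀ i ∈ Finset.Icc (1 : ℤ) n, fmin n lam i - i = if i ∈ lam then (n : ℤ) else 0 := by
    intro i hi
    rw [Finset.mem_Icc] at hi
    simp only [fmin, residue_of_mem_Icc hi.1 hi.2]
    split_ifs <;> ring
  rw [Finset.sum_congr rfl hterm, Finset.sum_ite_mem, Finset.inter_eq_right.mpr hlam,
    Finset.sum_const, nsmul_eq_mul, mul_comm]

theorem alen_fmin (hlam : lam ⊆ Finset.Icc 1 (n : ℤ)) :
    alen n (fmin n lam) = lam.card * (n - lam.card) := by
  have hcompl : (Finset.Icc 1 (n : ℤ) \ lam).card = n - lam.card := by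
    rw [Finset.card_sdiff_of_subset hlam, Int.card_Icc, add_sub_cancel_right, Int.toNat_natCast]
  rw [← hcompl, ← Finset.card_product, alen, ← Set.ncard_coe_finset]
  refine Set.ncard_congr (fun p _ => (p.1, residue n p.2)) ?_ ?_ ?_
  · rintro ⟨i, j⟩ ⟨hi₁, hin, hij, hinv⟩
    obtain ⟨hi, hj, -⟩ := (fmin_lt_fmin_iff hij).mp hinv
    rw [residue_of_mem_Icc hi₁ hin] at hi
    simp only [Finset.coe_product, Set.mem_prod, Finset.mem_coe, Finset.mem_sdiff]
    exact ⟨hi, residue_mem_Icc (by omega) j, hj⟩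
  · rintro ⟨i, j⟩ ⟨i', j'⟩ ⟨-, -, hij, hinv⟩ ⟨-, -, hij', hinv'⟩ h
    obtain ⟨rfl, hres⟩ := Prod.mk.inj h
    dsimp only at hij hinv hij' hinv' hres
    have hj := ((fmin_lt_fmin_iff hij).mp hinv).2.2
    have hj' := ((fmin_lt_fmin_iff hij').mp hinv').2.2
    rw [residue_injOn_Ioo i ⟨hij, hj⟩ ⟨hij', hj'⟩ hres]
  · rintro ⟨i, s⟩ hp
    simp only [Finset.coe_product, Set.mem_prod, Finset.mem_coe, Finset.mem_sdiff,
      Finset.mem_Icc] at hp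
    obtain ⟨hi, ⟨hs₁, hsn⟩, hs⟩ := hp
    have hiI := Finset.mem_Icc.mp (hlam hi)
    have hsi : s ≠ i := fun h => hs (h ▸ hi)
    obtain ⟨j, hres, hij, hjn⟩ : ∃ j, residue n j = s ∧ i < j ∧ j < i + n := by
      rcases lt_or_gt_of_ne hsi with hsi | hsi
      · exact ⟨s + n, by rw [residue_add_self, residue_of_mem_Icc hs₁ hsn], by omega, by omega⟩
      · exact ⟨s, residue_of_mem_Icc hs₁ hsn, hsi, by omega⟩
    refine ⟨(i, j), ⟨hiI.1, hiI.2, hij, ?_⟩, by rw [hres]⟩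
    rw [fmin_lt_fmin_iff hij, residue_of_mem_Icc hiI.1 hiI.2, hres]
    exact ⟨hi, hs, hjn⟩

end AffinePermutation

theorem fmin_properties_general (n k : ℕ)
    (lam : Finset ℤ) (hlam : lam ⊆ Finset.Icc (1 : ℤ) (n : ℤ)) (hcard : lam.card = k) :
    Function.Bijective (fun i : ℤ => if (i - 1) % n + 1 ∈ lam then i + n else i) ∧
    (∀ i : ℤ, (fun i : ℤ => if (i - 1) % n + 1 ∈ lam then i + n else i) (i + n)
        = (fun i : ℤ => if (i - 1) % n + 1 ∈ lam then i + n else i) i + n) ∧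
    (∀ i : ℤ, i ≤ (if (i - 1) % n + 1 ∈ lam then i + n else i) ∧
        (if (i - 1) % n + 1 ∈ lam then i + n else i) ≤ i + n) ∧
    (∑ i ∈ Finset.Icc (1 : ℤ) (n : ℤ),
        ((if (i - 1) % n + 1 ∈ lam then i + n else i) - i) = n * k) ∧
    alen n (fun i : ℤ => if (i - 1) % n + 1 ∈ lam then i + n else i) = k * (n - k) := by
  subst hcard
  exact ⟨AffinePermutation.fmin_bijective n lam, AffinePermutation.fmin_add_self n lam,
    fun i => ⟨AffinePermutation.le_fmin n lam i, AffinePermutation.fmin_le n lam i⟩,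
    AffinePermutation.sum_fmin_sub_self hlam, AffinePermutation.alen_fmin hlam⟩

/-- For a `k`-subset `λ ⊆ [n]`, the affine permutation `f_{min,λ}` given by
`f i = i + n` when the residue of `i` in `[1,n]` lies in `λ` and `f i = i`
otherwise, is an affine permutation, is bounded, has `av = k`, and has length
`k (n - k)`. -/
theorem fmin_properties (n k : ℕ) (hn : 1 ≤ n) (hk : k ≤ n)
    (lam : Finset ℤ) (hlam : lam ⊆ Finset.Icc (1 : ℤ) (n : ℤ)) (hcard : lam.card = k) :
    Function.Bijective (fun i : ℤ => if (i - 1) % n + 1 ∈ lam then i + n else i) ∧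
    (∀ i : ℤ, (fun i : ℤ => if (i - 1) % n + 1 ∈ lam then i + n else i) (i + n)
        = (fun i : ℤ => if (i - 1) % n + 1 ∈ lam then i + n else i) i + n) ∧
    (∀ i : ℤ, i ≤ (if (i - 1) % n + 1 ∈ lam then i + n else i) ∧
        (if (i - 1) % n + 1 ∈ lam then i + n else i) ≤ i + n) ∧
    (∑ i ∈ Finset.Icc (1 : ℤ) (n : ℤ),
        ((if (i - 1) % n + 1 ∈ lam then i + n else i) - i) = n * k) ∧
    alen n (fun i : ℤ => if (i - 1) % n + 1 ∈ lam then i + n else i) = k * (n - k) :=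
  fmin_properties_general n k lam hlam hcard
end

section
/- If u ≤_k w_λ where w_λ is the k-Grassmannian permutation associated to a k-subset λ ⊆ [n], then the affine permutation f_u defined by f_u(w_λ(i)) = u(i) + n for 1 ≤ i ≤ k and f_u(w_λ(i)) = u(i) for k < i ≤ n (extended periodically) is bounded: i ≤ f_u(i) ≤ i + n for all i, and its set of anti-excedance positions {i ∈ [n] : f_u(i) > n} equals λ. -/
/-!
On the window `1, …, n` every position is `w_λ(j) + 1` for exactly one `j`, and there the two
inequalities of `u ≤ₖ w_λ` give `w_λ(j) ≤ u(j)` or `u(j) ≤ w_λ(j)` according to the block of `j`,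
which is precisely the bound `i ≤ f_u(i) ≤ i + n`; the shift by `n` happens exactly on the first
block, so the anti-excedances are the values of `w_λ` there. The displacement `f_u(i) - i` is
`n`-periodic, so the bound propagates from the window to all of `ℤ`.
-/

/-- The `k`-Bruhat order on `Sₙ` (positions `0,…,n-1` stand for `1,…,n`). -/
def kBruhat (n k : ℕ) (u v : Equiv.Perm (Fin n)) : Prop :=
  (∀ i : Fin n, (i : ℕ) < k → u i ≤ v i) ∧
  (∀ j : Fin n, k ≤ (j : ℕ) → v j ≤ u j) ∧
  (∀ i j : Fin n, i < j → ((j : ℕ) < k ∨ k ≤ (i : ℕ)) → u i < u j → v i < v j)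

/-- `w` is `k`-Grassmannian. -/
def Grassmannian (n k : ℕ) (w : Equiv.Perm (Fin n)) : Prop :=
  (∀ i j : Fin n, i < j → (j : ℕ) < k → w i < w j) ∧
  (∀ i j : Fin n, i < j → k ≤ (i : ℕ) → w i < w j)

theorem kBruhat.fu_window {n k : ℕ} {u w : Equiv.Perm (Fin n)} (huw : kBruhat n k u w)
    {f : ℤ → ℤ} (j : Fin n)
    (hfj : f (((w j : ℕ) : ℤ) + 1) = ((u j : ℕ) : ℤ) + 1 + if (j : ℕ) < k then (n : ℤ) else 0) :
    ((w j : ℕ) : ℤ) + 1 ≤ f (((w j : ℕ) : ℤ) + 1) ∧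
      f (((w j : ℕ) : ℤ) + 1) ≤ ((w j : ℕ) : ℤ) + 1 + n ∧
      ((n : ℤ) < f (((w j : ℕ) : ℤ) + 1) ↔ (j : ℕ) < k) := by
  have hw := (w j).isLt
  have hu := (u j).isLt
  by_cases hjk : (j : ℕ) < k
  · have hle : (u j : ℕ) ≤ w j := huw.1 j hjk
    rw [hfj, if_pos hjk]
    omega
  · have hle : (w j : ℕ) ≤ u j := huw.2.1 j (not_lt.mp hjk)
    rw [hfj, if_neg hjk]
    omega

theorem Equiv.Perm.exists_apply_add_one_eq {n : ℕ} (w : Equiv.Perm (Fin n)) {i : ℤ}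
    (hi : i ∈ Finset.Icc (1 : ℤ) n) : ∃ j, ((w j : ℕ) : ℤ) + 1 = i := by
  rw [Finset.mem_Icc] at hi
  refine ⟨w.symm ⟨(i - 1).toNat, by omega⟩, ?_⟩
  rw [Equiv.apply_symm_apply, Fin.val_mk]
  omega

theorem fu_bounded_antiexcedances_general (n k : ℕ) (hn : 1 ≤ n)
    (u w : Equiv.Perm (Fin n)) (huw : kBruhat n k u w)
    (f : ℤ → ℤ) (hper : ∀ i : ℤ, f (i + n) = f i + n)
    (hdef : ∀ i : Fin n,
      f (((w i : ℕ) : ℤ) + 1) = ((u i : ℕ) : ℤ) + 1 + if (i : ℕ) < k then (n : ℤ) else 0) :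
    (∀ i : ℤ, i ≤ f i ∧ f i ≤ i + n) ∧
    (Finset.Icc (1 : ℤ) (n : ℤ)).filter (fun i => (n : ℤ) < f i) =
      (Finset.univ.filter (fun i : Fin n => (i : ℕ) < k)).image
        (fun i => ((w i : ℕ) : ℤ) + 1) := by
  have hwindow j := huw.fu_window j (hdef j)
  have hdisp : Function.Periodic (fun i => f i - i) n := fun i => by
    simp only [hper]
    ring
  refine ⟨fun i => ?_, ?_⟩
  · obtain ⟨y, hy, hfy⟩ := hdisp.exists_mem_Ico (by omega) i 1
    obtain ⟨j, rfl⟩ := w.exists_apply_add_one_eq (i := y) (by rw [Set.mem_Ico] at hy; rw [Finset.mem_Icc]; omega)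
    have := hwindow j
    omega
  · ext i
    simp only [Finset.mem_filter, Finset.mem_image, Finset.mem_univ, true_and]
    constructor
    · rintro ⟨hi, hfi⟩
      obtain ⟨j, rfl⟩ := w.exists_apply_add_one_eq hi
      exact ⟨j, (hwindow j).2.2.mp hfi, rfl⟩
    · rintro ⟨j, hjk, rfl⟩
      have := (w j).isLt
      exact ⟨by simp only [Finset.mem_Icc]; omega, (hwindow j).2.2.mpr hjk⟩

/-- If `u ≤ₖ w_λ`, then the affine permutation `f_u`, defined by
`f_u(w_λ(i)) = u(i) + n` on the first block and `f_u(w_λ(i)) = u(i)` on the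
second block (extended `n`-periodically), is bounded, and its set of
anti-excedance positions `{i ∈ [n] : f_u(i) > n}` is exactly `λ`
(the set of values of `w_λ` on the first block). -/
theorem fu_bounded_antiexcedances (n k : ℕ) (hn : 1 ≤ n) (hk : k ≤ n)
    (u w : Equiv.Perm (Fin n)) (hw : Grassmannian n k w) (huw : kBruhat n k u w)
    (f : ℤ → ℤ) (hper : ∀ i : ℤ, f (i + n) = f i + n)
    (hdef : ∀ i : Fin n,
      f (((w i : ℕ) : ℤ) + 1) = ((u i : ℕ) : ℤ) + 1 + if (i : ℕ) < k then (n : ℤ) else 0) :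
    (∀ i : ℤ, i ≤ f i ∧ f i ≤ i + n) ∧
    (Finset.Icc (1 : ℤ) (n : ℤ)).filter (fun i => (n : ℤ) < f i) =
      (Finset.univ.filter (fun i : Fin n => (i : ℕ) < k)).image
        (fun i => ((w i : ℕ) : ℤ) + 1) :=
  fu_bounded_antiexcedances_general n k hn u w huw f hper hdef
end

section
/- Let λ ⊆ [n] with |λ| = k. The maps u ↦ f_u = u·t_k·w_λ^{-1} and f ↦ u_f = f·w_λ·t_k^{-1} are mutually inverse bijections between {u ∈ S_n : u ≤_k w_λ} and {f ∈ CB(k,n) : Λ(f) = λ}, where t_k is the translation element [1+n,…,k+n,k+1,…,n]. -/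
/-- `f` is a bounded affine permutation of period `n` with `av f = k`,
i.e. an element of `CB(k,n)`. -/
def CBmem (n k : ℕ) (f : ℤ → ℤ) : Prop :=
  Function.Bijective f ∧ (∀ i : ℤ, f (i + n) = f i + n) ∧
  (∀ i : ℤ, i ≤ f i ∧ f i ≤ i + n) ∧
  ∑ i ∈ Finset.Icc (1 : ℤ) (n : ℤ), (f i - i) = (n : ℤ) * k

/-- The defining relation `f = f_u = u·t_k·w⁻¹`, equivalently `u = u_f = f·w·t_k⁻¹`:
`f(w(i)) = u(i) + n` on the first block and `f(w(i)) = u(i)` on the second. -/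
def rel (n k : ℕ) (w u : Equiv.Perm (Fin n)) (f : ℤ → ℤ) : Prop :=
  ∀ i : Fin n,
    f (((w i : ℕ) : ℤ) + 1) = ((u i : ℕ) : ℤ) + 1 + if (i : ℕ) < k then (n : ℤ) else 0

/-!
Write every integer uniquely as `q * n + r + 1` with `q : ℤ` and `r : Fin n`. A map `f : ℤ → ℤ`
with `f (x + n) = f x + n` is determined by its window `f 1, …, f n`, and `f = u·t_k·w⁻¹` says
exactly that `f (w i + 1) = u i + 1 + n·[i < k]`. On the window, the bound `x ≤ f x ≤ x + n`
becomes `u i ≤ w i` for `i < k` and `w i ≤ u i` for `i ≥ k`, i.e. the `k`-Bruhat order, whose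
remaining condition holds automatically because `w` is Grassmannian. Conversely, `Λ(f) = λ` puts
each `f (w i + 1)` into the block predicted by `t_k`, and injectivity plus periodicity of `f`
force the residues `u i` to form a permutation.
-/

open Equiv Finset

namespace AffinePerm

section Window

variable {n : ℕ} [NeZero n]

def windowEquiv (n : ℕ) [NeZero n] : ℤ × Fin n ≃ ℤ :=
  (Int.divModEquiv n).symm.trans (Equiv.addRight 1)

@[simp]
lemma windowEquiv_apply (q : ℤ) (r : Fin n) :
    windowEquiv n (q, r) = q * n + ((r : ℕ) : ℤ) + 1 := by
  simp [windowEquiv]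

lemma windowEquiv_add_mul (q p : ℤ) (r : Fin n) :
    windowEquiv n (q, r) + p * n = windowEquiv n (q + p, r) := by
  simp only [windowEquiv_apply]; ring

/-- The periodic extension of `σ ∈ Sₙ` to an affine permutation. -/
def ofPerm (σ : Perm (Fin n)) : Perm ℤ :=
  (windowEquiv n).permCongr (Equiv.prodCongr (Equiv.refl ℤ) σ)

lemma ofPerm_apply (σ : Perm (Fin n)) (q : ℤ) (r : Fin n) :
    ofPerm σ (windowEquiv n (q, r)) = windowEquiv n (q, σ r) := by
  simp only [ofPerm, permCongr_apply, symm_apply_apply]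
  rfl

lemma ofPerm_inv_apply (σ : Perm (Fin n)) (q : ℤ) (r : Fin n) :
    (ofPerm σ)⁻¹ (windowEquiv n (q, σ r)) = windowEquiv n (q, r) := by
  rw [Perm.inv_eq_iff_eq, ofPerm_apply]

def shear (c : Fin n → ℤ) : Perm (ℤ × Fin n) where
  toFun p := (p.1 + c p.2, p.2)
  invFun p := (p.1 - c p.2, p.2)
  left_inv p := by simp
  right_inv p := by simp

def translation (c : Fin n → ℤ) : Perm ℤ :=
  (windowEquiv n).permCongr (shear c)

lemma translation_apply (c : Fin n → ℤ) (q : ℤ) (r : Fin n) :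
    translation c (windowEquiv n (q, r)) = windowEquiv n (q + c r, r) := by
  simp only [translation, permCongr_apply, symm_apply_apply]
  rfl

end Window

section Periodic

variable {n : ℕ} {g h : ℤ → ℤ}

lemma map_add_mul_of_map_add (hg : ∀ x, g (x + n) = g x + n) (x q : ℤ) :
    g (x + q * n) = g x + q * n := by
  simpa using AddConstMapClass.map_add_zsmul (AddConstMap.mk g hg) x q

lemma sum_Icc_one_eq_sum_fin (φ : ℤ → ℤ) :
    ∑ x ∈ Icc (1 : ℤ) n, φ x = ∑ r : Fin n, φ (((r : ℕ) : ℤ) + 1) := by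
  symm
  refine sum_bij (fun r _ => ((r : ℕ) : ℤ) + 1) (fun r _ => ?_) (fun r _ s _ h => ?_)
    (fun x hx => ?_) (fun _ _ => rfl)
  · simp only [mem_Icc]; omega
  · exact Fin.ext (by omega)
  · simp only [mem_Icc] at hx
    exact ⟨⟨(x - 1).toNat, by omega⟩, mem_univ _, by simp only; omega⟩

variable [NeZero n]

lemma map_windowEquiv (hg : ∀ x, g (x + n) = g x + n) (q : ℤ) (r : Fin n) :
    g (windowEquiv n (q, r)) = g (((r : ℕ) : ℤ) + 1) + q * n := by
  rw [windowEquiv_apply, add_assoc, add_comm, map_add_mul_of_map_add hg]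

lemma eq_of_window (hg : ∀ x, g (x + n) = g x + n) (hh : ∀ x, h (x + n) = h x + n)
    (hgh : ∀ r : Fin n, g (((r : ℕ) : ℤ) + 1) = h (((r : ℕ) : ℤ) + 1)) : g = h := by
  funext x
  obtain ⟨⟨q, r⟩, rfl⟩ := (windowEquiv n).surjective x
  rw [map_windowEquiv hg, map_windowEquiv hh, hgh]

lemma le_and_le_add_of_window (hg : ∀ x, g (x + n) = g x + n)
    (hwin : ∀ r : Fin n, ((r : ℕ) : ℤ) + 1 ≤ g (((r : ℕ) : ℤ) + 1) ∧
      g (((r : ℕ) : ℤ) + 1) ≤ ((r : ℕ) : ℤ) + 1 + n) (x : ℤ) :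
    x ≤ g x ∧ g x ≤ x + n := by
  obtain ⟨⟨q, r⟩, rfl⟩ := (windowEquiv n).surjective x
  rw [map_windowEquiv hg, windowEquiv_apply]
  constructor <;> linarith [hwin r]

lemma exists_perm_of_window (hinj : Function.Injective g) (hg : ∀ x, g (x + n) = g x + n)
    (c : Fin n → ℤ) (hc : ∀ r : Fin n, c r * n < g (((r : ℕ) : ℤ) + 1) ∧
      g (((r : ℕ) : ℤ) + 1) ≤ c r * n + n) :
    ∃ σ : Perm (Fin n), ∀ r : Fin n,
      g (((r : ℕ) : ℤ) + 1) = ((σ r : ℕ) : ℤ) + 1 + c r * n := by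
  let σ₀ (r : Fin n) : Fin n := ⟨(g (((r : ℕ) : ℤ) + 1) - 1 - c r * n).toNat,
    by have := hc r; omega⟩
  have hσ₀ (r : Fin n) : ((σ₀ r : ℕ) : ℤ) = g (((r : ℕ) : ℤ) + 1) - 1 - c r * n := by
    have := hc r
    simp only [σ₀]; omega
  have hinj₀ : Function.Injective σ₀ := by
    intro r s hrs
    have key : g (windowEquiv n (0, r)) = g (windowEquiv n (c r - c s, s)) := by
      rw [map_windowEquiv hg, map_windowEquiv hg, zero_mul, add_zero]
      have := congrArg (fun t : Fin n => ((t : ℕ) : ℤ)) hrs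
      simp only [hσ₀] at this
      linarith
    exact (congrArg Prod.snd ((windowEquiv n).injective (hinj key)) :)
  refine ⟨Equiv.ofBijective σ₀ hinj₀.bijective_of_finite, fun r => ?_⟩
  rw [Equiv.ofBijective_apply, hσ₀]; ring

end Periodic

section Fu

variable {n : ℕ} [NeZero n]

def tk (n k : ℕ) [NeZero n] : Perm ℤ :=
  translation fun r : Fin n => if (r : ℕ) < k then 1 else 0

def fu (k : ℕ) (w u : Perm (Fin n)) : Perm ℤ :=
  ofPerm u * tk n k * (ofPerm w)⁻¹

variable (k : ℕ) (w u : Perm (Fin n))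

lemma fu_apply (q : ℤ) (i : Fin n) :
    fu k w u (windowEquiv n (q, w i)) =
      windowEquiv n (q + (if (i : ℕ) < k then 1 else 0), u i) := by
  simp only [fu, tk, Perm.mul_apply, ofPerm_inv_apply, translation_apply, ofPerm_apply]

lemma fu_add (x : ℤ) : fu k w u (x + n) = fu k w u x + n := by
  obtain ⟨⟨q, r⟩, rfl⟩ := (windowEquiv n).surjective x
  obtain ⟨i, rfl⟩ := w.surjective r
  rw [← one_mul (n : ℤ), windowEquiv_add_mul, fu_apply, fu_apply, windowEquiv_add_mul,
    add_right_comm]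

lemma rel_fu : rel n k w u (fu k w u) := by
  intro i
  have := fu_apply k w u 0 i
  simp only [windowEquiv_apply, zero_mul, zero_add] at this
  rw [this]
  split_ifs <;> ring

end Fu

section Rel

variable {n k : ℕ} {w u : Perm (Fin n)} {f : ℤ → ℤ}

lemma lt_iff_of_rel (h : rel n k w u f) (i : Fin n) :
    (n : ℤ) < f (((w i : ℕ) : ℤ) + 1) ↔ (i : ℕ) < k := by
  have := (u i).isLt
  rw [h i]
  split_ifs with hi <;> simp only [hi, iff_true, iff_false] <;> omega

lemma perm_eq_of_rel {u' : Perm (Fin n)} (h : rel n k w u f) (h' : rel n k w u' f) : u = u' := by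
  ext i
  have := (h i).symm.trans (h' i)
  omega

lemma eq_of_rel [NeZero n] {g : ℤ → ℤ} (hf : ∀ x, f (x + n) = f x + n)
    (hg : ∀ x, g (x + n) = g x + n) (h : rel n k w u f) (h' : rel n k w u g) : f = g :=
  eq_of_window hf hg (w.surjective.forall.2 fun i => (h i).trans (h' i).symm)

lemma window_bounds_of_rel (hu : kBruhat n k u w) (h : rel n k w u f) (r : Fin n) :
    ((r : ℕ) : ℤ) + 1 ≤ f (((r : ℕ) : ℤ) + 1) ∧ f (((r : ℕ) : ℤ) + 1) ≤ ((r : ℕ) : ℤ) + 1 + n := by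
  obtain ⟨i, rfl⟩ := w.surjective r
  have := (w i).isLt
  have := (u i).isLt
  rw [h i]
  split_ifs with hi
  · have := Fin.le_def.1 (hu.1 i hi)
    omega
  · have := Fin.le_def.1 (hu.2.1 i (not_lt.1 hi))
    omega

lemma sum_sub_eq_of_rel (hk : k ≤ n) (h : rel n k w u f) :
    ∑ x ∈ Icc (1 : ℤ) n, (f x - x) = n * k := by
  have hsum (σ : Perm (Fin n)) : ∑ i, ((σ i : ℕ) : ℤ) = ∑ i : Fin n, ((i : ℕ) : ℤ) :=
    Equiv.sum_comp σ fun i : Fin n => ((i : ℕ) : ℤ)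
  have hrel (i : Fin n) : f (((w i : ℕ) : ℤ) + 1) - (((w i : ℕ) : ℤ) + 1) =
      (((u i : ℕ) : ℤ) - ((w i : ℕ) : ℤ)) + if (i : ℕ) < k then (n : ℤ) else 0 := by
    rw [h i]; ring
  rw [sum_Icc_one_eq_sum_fin, ← Equiv.sum_comp w, sum_congr rfl fun i _ => hrel i,
    sum_add_distrib, sum_sub_distrib, hsum, hsum, sub_self, zero_add, ← sum_filter, sum_const,
    Fin.card_filter_val_lt, min_eq_right hk, nsmul_eq_mul, mul_comm]

lemma kBruhat_of_rel (hw : Grassmannian n k w) (hb : ∀ x, x ≤ f x ∧ f x ≤ x + n)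
    (h : rel n k w u f) : kBruhat n k u w := by
  refine ⟨fun i hi => Fin.le_def.2 ?_, fun i hi => Fin.le_def.2 ?_,
    fun i j hij hij' _ => hij'.elim (hw.1 i j hij) (hw.2 i j hij)⟩
  · have := hb (((w i : ℕ) : ℤ) + 1)
    rw [h i, if_pos hi] at this
    omega
  · have := hb (((w i : ℕ) : ℤ) + 1)
    rw [h i, if_neg (not_lt.2 hi)] at this
    omega

lemma CBmem_of_rel [NeZero n] (hk : k ≤ n) (hbij : Function.Bijective f)
    (hf : ∀ x, f (x + n) = f x + n) (hu : kBruhat n k u w) (h : rel n k w u f) :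
    CBmem n k f :=
  ⟨hbij, hf, le_and_le_add_of_window hf (window_bounds_of_rel hu h), sum_sub_eq_of_rel hk h⟩

lemma exists_rel_of_CBmem [NeZero n] (hf : CBmem n k f)
    (hΛ : ∀ i : Fin n, (n : ℤ) < f (((w i : ℕ) : ℤ) + 1) ↔ (i : ℕ) < k) :
    ∃ u : Perm (Fin n), rel n k w u f := by
  obtain ⟨σ, hσ⟩ := exists_perm_of_window hf.1.1 hf.2.1
    (fun r => if ((w.symm r : Fin n) : ℕ) < k then 1 else 0) (w.surjective.forall.2 fun i => by
      have := hf.2.2.1 (((w i : ℕ) : ℤ) + 1)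
      have := hΛ i
      have := (w i).isLt
      simp only [symm_apply_apply]
      split_ifs with hi <;> simp only [hi, iff_true, iff_false, not_lt] at * <;> omega)
  refine ⟨w.trans σ, fun i => ?_⟩
  rw [hσ, trans_apply, symm_apply_apply]
  split_ifs <;> ring

end Rel

end AffinePerm

open AffinePerm in
theorem fu_uf_bijections_general (n k : ℕ) (hn : 1 ≤ n) (hk : k ≤ n)
    (w : Equiv.Perm (Fin n)) (L : Finset (Fin n))
    (hw : Grassmannian n k w)
    (hwL : (Finset.univ.filter (fun i : Fin n => (i : ℕ) < k)).image w = L) :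
    (∀ u : Equiv.Perm (Fin n), kBruhat n k u w →
      ∃! f : ℤ → ℤ, (CBmem n k f ∧
        (∀ i : Fin n, ((n : ℤ) < f (((i : ℕ) : ℤ) + 1) ↔ i ∈ L))) ∧ rel n k w u f) ∧
    (∀ f : ℤ → ℤ, CBmem n k f →
      (∀ i : Fin n, ((n : ℤ) < f (((i : ℕ) : ℤ) + 1) ↔ i ∈ L)) →
      ∃! u : Equiv.Perm (Fin n), kBruhat n k u w ∧ rel n k w u f) := by
  have : NeZero n := ⟨by omega⟩
  have hΛ (f : ℤ → ℤ) : (∀ r : Fin n, ((n : ℤ) < f (((r : ℕ) : ℤ) + 1) ↔ r ∈ L)) ↔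
      ∀ i : Fin n, ((n : ℤ) < f (((w i : ℕ) : ℤ) + 1) ↔ (i : ℕ) < k) := by
    rw [w.surjective.forall]
    simp only [← hwL, w.injective.mem_finset_image, mem_filter, mem_univ, true_and]
  refine ⟨fun u hu => ?_, fun f hf hfL => ?_⟩
  · have hrel := rel_fu k w u
    refine ⟨fu k w u, ⟨⟨CBmem_of_rel hk (fu k w u).bijective (fu_add k w u) hu hrel,
      (hΛ _).2 (lt_iff_of_rel hrel)⟩, hrel⟩, fun f ⟨⟨hf, _⟩, hrel'⟩ => ?_⟩
    exact eq_of_rel hf.2.1 (fu_add k w u) hrel' hrel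
  · obtain ⟨u, hu⟩ := exists_rel_of_CBmem hf ((hΛ f).1 hfL)
    exact ⟨u, ⟨kBruhat_of_rel hw hf.2.2.1 hu, hu⟩, fun u' hu' => perm_eq_of_rel hu'.2 hu⟩

/-- For a `k`-subset `λ ⊆ [n]` with Grassmannian permutation `w = w_λ`, the maps
`u ↦ f_u = u·t_k·w_λ⁻¹` and `f ↦ u_f = f·w_λ·t_k⁻¹` are mutually inverse
bijections between `{u : u ≤ₖ w_λ}` and `{f ∈ CB(k,n) : Λ(f) = λ}`. -/
theorem fu_uf_bijections (n k : ℕ) (hn : 1 ≤ n) (hk : k ≤ n)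
    (w : Equiv.Perm (Fin n)) (L : Finset (Fin n)) (hL : L.card = k)
    (hw : Grassmannian n k w)
    (hwL : (Finset.univ.filter (fun i : Fin n => (i : ℕ) < k)).image w = L) :
    (∀ u : Equiv.Perm (Fin n), kBruhat n k u w →
      ∃! f : ℤ → ℤ, (CBmem n k f ∧
        (∀ i : Fin n, ((n : ℤ) < f (((i : ℕ) : ℤ) + 1) ↔ i ∈ L))) ∧ rel n k w u f) ∧
    (∀ f : ℤ → ℤ, CBmem n k f →
      (∀ i : Fin n, ((n : ℤ) < f (((i : ℕ) : ℤ) + 1) ↔ i ∈ L)) →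
      ∃! u : Equiv.Perm (Fin n), kBruhat n k u w ∧ rel n k w u f) :=
  fu_uf_bijections_general n k hn hk w L hw hwL
end

section
/- In S_n, u ⋖_k v is a cover in the k-Bruhat order if and only if there exist p ≤ k < q with v = u·s_{p,q} (s_{p,q} the transposition), u(p) < u(q), and there is no r with p < r < q and u(p) < u(r) < u(q). -/
private lemma kBruhat_swap_right {n k : ℕ} {u : Equiv.Perm (Fin n)} {p q : Fin n}
    (hp : (p : ℕ) < k) (hq : k ≤ (q : ℕ)) (hab : u p < u q)
    (hnr : ¬∃ r : Fin n, p < r ∧ r < q ∧ u p < u r ∧ u r < u q) :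
    kBruhat n k u (u * Equiv.swap p q) := by
  set v := u * Equiv.swap p q with hv
  have hvp : v p = u q := by simp [hv, Equiv.Perm.mul_apply]
  have hvq : v q = u p := by simp [hv, Equiv.Perm.mul_apply]
  have hvo : ∀ i : Fin n, p ≠ i → q ≠ i → v i = u i := fun i h1 h2 => by
    simp [hv, Equiv.Perm.mul_apply, Equiv.swap_apply_of_ne_of_ne h1.symm h2.symm]
  refine ⟨?_, ?_, ?_⟩
  · intro i hi
    rcases eq_or_ne p i with rfl | hip
    · rw [hvp]; exact hab.le
    · rw [hvo i hip (by rintro rfl; omega)]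
  · intro j hj
    rcases eq_or_ne q j with rfl | hjq
    · rw [hvq]; exact hab.le
    · rw [hvo j (by rintro rfl; omega) hjq]
  · intro i j hij hblk hu
    rcases hblk with hb | hb
    · have hiq : q ≠ i := by rintro rfl; have := Fin.lt_def.mp hij; omega
      have hjq : q ≠ j := by rintro rfl; omega
      rcases eq_or_ne p i with rfl | hip
      · have hjp : p ≠ j := ne_of_lt hij
        rw [hvp, hvo j hjp hjq]
        rcases lt_trichotomy (u j) (u q) with h | h | h
        · exact absurd ⟨j, hij, Fin.lt_def.mpr (by omega), hu, h⟩ hnr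
        · exact absurd (u.injective h).symm hjq
        · exact h
      · rcases eq_or_ne p j with rfl | hjp
        · rw [hvo i hip hiq, hvp]; exact hu.trans hab
        · rw [hvo i hip hiq, hvo j hjp hjq]; exact hu
    · have hip : p ≠ i := by rintro rfl; omega
      have hjp : p ≠ j := by rintro rfl; have := Fin.lt_def.mp hij; omega
      rcases eq_or_ne q j with rfl | hjq
      · have hiq : q ≠ i := ne_of_gt hij
        rw [hvq, hvo i hip hiq]
        rcases lt_trichotomy (u i) (u p) with h | h | h
        · exact h
        · exact absurd (u.injective h).symm hip
        · exact absurd ⟨i, Fin.lt_def.mpr (by omega), hij, h, hu⟩ hnr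
      · rcases eq_or_ne q i with rfl | hiq
        · rw [hvq, hvo j hjp hjq]; exact hab.trans hu
        · rw [hvo i hip hiq, hvo j hjp hjq]; exact hu

private lemma kBruhat_sandwich {n k : ℕ} {u z : Equiv.Perm (Fin n)} {p q : Fin n}
    (hp : (p : ℕ) < k) (hq : k ≤ (q : ℕ))
    (h1 : kBruhat n k u z) (h2 : kBruhat n k z (u * Equiv.swap p q)) :
    z = u ∨ z = u * Equiv.swap p q := by
  set v := u * Equiv.swap p q with hv
  have hpq : p ≠ q := by rintro rfl; omega
  have hvp : v p = u q := by simp [hv, Equiv.Perm.mul_apply]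
  have hvq : v q = u p := by simp [hv, Equiv.Perm.mul_apply]
  have hvo : ∀ i : Fin n, p ≠ i → q ≠ i → v i = u i := fun i hip hiq => by
    simp [hv, Equiv.Perm.mul_apply, Equiv.swap_apply_of_ne_of_ne hip.symm hiq.symm]
  have heq : ∀ i : Fin n, p ≠ i → q ≠ i → z i = u i := by
    intro i hip hiq
    rcases lt_or_ge (i : ℕ) k with hik | hik
    · have ha := h2.1 i hik
      rw [hvo i hip hiq] at ha
      exact le_antisymm ha (h1.1 i hik)
    · have ha := h2.2.1 i hik
      rw [hvo i hip hiq] at ha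
      exact le_antisymm (h1.2.1 i hik) ha
  by_cases hzp : z p = u p
  · left
    have hzq : z q = u q := by
      by_contra hzq
      obtain ⟨m, hum⟩ : ∃ m, u m = z q := ⟨u.symm (z q), u.apply_symm_apply _⟩
      rcases eq_or_ne p m with rfl | hmp
      · exact hpq (z.injective (by rw [← hum, hzp]) ).symm
      · rcases eq_or_ne q m with rfl | hmq
        · exact hzq hum.symm
        · exact hmq (z.injective (by rw [heq m hmp hmq, hum])).symm
    refine Equiv.ext fun i => ?_
    rcases eq_or_ne p i with rfl | hip
    · exact hzp
    · rcases eq_or_ne q i with rfl | hiq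
      · exact hzq
      · exact heq i hip hiq
  · right
    have hzp' : z p = u q := by
      obtain ⟨m, hum⟩ : ∃ m, u m = z p := ⟨u.symm (z p), u.apply_symm_apply _⟩
      rcases eq_or_ne p m with rfl | hmp
      · exact absurd hum.symm hzp
      · rcases eq_or_ne q m with rfl | hmq
        · exact hum.symm
        · exact absurd (z.injective (by rw [heq m hmp hmq, hum])).symm hmp
    have hzq' : z q = u p := by
      obtain ⟨m, hum⟩ : ∃ m, u m = z q := ⟨u.symm (z q), u.apply_symm_apply _⟩
      rcases eq_or_ne p m with rfl | hmp
      · exact hum.symm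
      · rcases eq_or_ne q m with rfl | hmq
        · exact absurd (z.injective (hum.symm.trans (by rw [hzp', hum]))) hpq.symm
        · exact absurd (z.injective (by rw [heq m hmp hmq, hum])).symm hmq
    refine Equiv.ext fun i => ?_
    rcases eq_or_ne p i with rfl | hip
    · rw [hzp', hvp]
    · rcases eq_or_ne q i with rfl | hiq
      · rw [hzq', hvq]
      · rw [heq i hip hiq, hvo i hip hiq]

/-- `u ⋖ₖ v` is a cover in the `k`-Bruhat order iff there exist `p ≤ k < q`
with `v = u·s_{p,q}`, `u(p) < u(q)`, and no `r` strictly between `p` and `q`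
with `u(p) < u(r) < u(q)`. -/
theorem kBruhat_cover_iff (n k : ℕ) (hk : k ≤ n) (u v : Equiv.Perm (Fin n)) :
    (kBruhat n k u v ∧ u ≠ v ∧
      ∀ z : Equiv.Perm (Fin n), kBruhat n k u z → kBruhat n k z v → z = u ∨ z = v) ↔
    ∃ p q : Fin n, (p : ℕ) < k ∧ k ≤ (q : ℕ) ∧ v = u * Equiv.swap p q ∧
      u p < u q ∧ ¬∃ r : Fin n, p < r ∧ r < q ∧ u p < u r ∧ u r < u q := by
  constructor
  · rintro ⟨h1, hne, hmin⟩
    have hu1 : ∀ i : Fin n, (i : ℕ) < k → u i ≤ v i := h1.1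
    have hu2 : ∀ j : Fin n, k ≤ (j : ℕ) → v j ≤ u j := h1.2.1
    have hu3 : ∀ i j : Fin n, i < j → ((j : ℕ) < k ∨ k ≤ (i : ℕ)) → u i < u j → v i < v j :=
      h1.2.2
    -- Step 1: there is an ascent in the first block
    have hSne : ∃ i : Fin n, (i : ℕ) < k ∧ u i < v i := by
      by_contra hS
      push_neg at hS
      have hfst : ∀ i : Fin n, (i : ℕ) < k → u i = v i := fun i hi =>
        le_antisymm (hu1 i hi) (hS i hi)
      apply hne
      have hsum : ∑ i : Fin n, ((u i : ℕ)) = ∑ i : Fin n, ((v i : ℕ)) := by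
        rw [Equiv.sum_comp u (fun i : Fin n => (i : ℕ)),
          Equiv.sum_comp v (fun i : Fin n => (i : ℕ))]
      have key : ∀ j : Fin n, k ≤ (j : ℕ) → u j = v j := by
        by_contra hK
        push_neg at hK
        obtain ⟨j0, hj0, hj0ne⟩ := hK
        have hlt :
            ∑ x ∈ Finset.univ.filter (fun i : Fin n => ¬ (i : ℕ) < k), ((v x : ℕ)) <
            ∑ x ∈ Finset.univ.filter (fun i : Fin n => ¬ (i : ℕ) < k), ((u x : ℕ)) := by
          refine Finset.sum_lt_sum (fun i hi => ?_) ⟨j0, ?_, ?_⟩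
          · simp only [Finset.mem_filter, Finset.mem_univ, true_and, not_lt] at hi
            exact Fin.le_def.mp (hu2 i hi)
          · simp only [Finset.mem_filter, Finset.mem_univ, true_and, not_lt]
            exact hj0
          · exact Fin.lt_def.mp (lt_of_le_of_ne (hu2 j0 hj0) (fun h => hj0ne h.symm))
        have e1 := Finset.sum_filter_add_sum_filter_not Finset.univ
          (fun i : Fin n => (i : ℕ) < k) (fun x : Fin n => ((u x : ℕ)))
        have e2 := Finset.sum_filter_add_sum_filter_not Finset.univ
          (fun i : Fin n => (i : ℕ) < k) (fun x : Fin n => ((v x : ℕ)))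
        have e3 : ∑ x ∈ Finset.univ.filter (fun i : Fin n => (i : ℕ) < k), ((u x : ℕ)) =
            ∑ x ∈ Finset.univ.filter (fun i : Fin n => (i : ℕ) < k), ((v x : ℕ)) :=
          Finset.sum_congr rfl (fun i hi => by
            simp only [Finset.mem_filter, Finset.mem_univ, true_and] at hi
            rw [hfst i hi])
        omega
      exact Equiv.ext fun i => by
        rcases lt_or_ge (i : ℕ) k with h | h
        · exact hfst i h
        · exact key i h
    -- Step 2: choose p with u p maximal among ascents in the first block
    obtain ⟨p, hpF, hpmax⟩ := Finset.exists_max_image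
      (Finset.univ.filter (fun i : Fin n => (i : ℕ) < k ∧ u i < v i)) (fun i => u i)
      (by obtain ⟨i, hi1, hi2⟩ := hSne
          exact ⟨i, by simp only [Finset.mem_filter, Finset.mem_univ, true_and]; exact ⟨hi1, hi2⟩⟩)
    simp only [Finset.mem_filter, Finset.mem_univ, true_and] at hpF
    obtain ⟨hp, hpa⟩ := hpF
    have hpmax' : ∀ i : Fin n, (i : ℕ) < k → u i < v i → u i ≤ u p := fun i a b =>
      hpmax i (by simp only [Finset.mem_filter, Finset.mem_univ, true_and]; exact ⟨a, b⟩)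
    -- Step 3: the position of v p in u is in the second block
    have hq0 : k ≤ ((u.symm (v p) : Fin n) : ℕ) := by
      by_contra h
      push_neg at h
      set m := u.symm (v p) with hm
      have hum : u m = v p := u.apply_symm_apply _
      rcases lt_or_eq_of_le (hu1 m h) with hlt | heq2
      · exact absurd (hpmax' m h hlt) (by rw [hum]; exact not_le.mpr hpa)
      · have hmp : m = p := v.injective (by rw [← heq2]; exact hum)
        rw [hmp] at hum
        exact (ne_of_lt hpa) hum
    -- Step 4: choose q with u q minimal in Q'
    obtain ⟨q, hqQ, hqmin⟩ := Finset.exists_min_image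
      (Finset.univ.filter
        (fun r : Fin n => k ≤ (r : ℕ) ∧ u p < u r ∧ u r ≤ v p ∧ v r < u r))
      (fun r => u r)
      ⟨u.symm (v p), by
        simp only [Finset.mem_filter, Finset.mem_univ, true_and]
        have hum : u (u.symm (v p)) = v p := u.apply_symm_apply _
        refine ⟨hq0, by rw [hum]; exact hpa, by rw [hum], ?_⟩
        rw [hum]
        have h2 := hu2 _ hq0
        rw [hum] at h2
        rcases lt_or_eq_of_le h2 with h | h
        · exact h
        · exact absurd (v.injective h) (fun hmp => by rw [hmp] at hq0; omega)⟩
    simp only [Finset.mem_filter, Finset.mem_univ, true_and] at hqQ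
    obtain ⟨hq, hab, hbc, hdq⟩ := hqQ
    have hqmin' : ∀ r : Fin n, k ≤ (r : ℕ) → u p < u r → u r ≤ v p → v r < u r →
        u q ≤ u r := fun r a b c d =>
      hqmin r (by simp only [Finset.mem_filter, Finset.mem_univ, true_and]; exact ⟨a, b, c, d⟩)
    -- Step 5: v q ≤ u p
    have hda : v q ≤ u p := by
      by_contra h
      push_neg at h
      set m := u.symm (v q) with hm
      have hum : u m = v q := u.apply_symm_apply _
      have hmk : k ≤ (m : ℕ) := by
        by_contra hmk
        push_neg at hmk
        rcases lt_or_eq_of_le (hu1 m hmk) with hlt | heq2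
        · exact absurd (hpmax' m hmk hlt) (by rw [hum]; exact not_le.mpr h)
        · have hmq : m = q := v.injective (heq2.symm.trans hum)
          rw [hmq] at hmk; omega
      have hvm : v m < u m := by
        rcases lt_or_eq_of_le (hu2 m hmk) with hlt | heq2
        · exact hlt
        · have hmq : m = q := v.injective (heq2.trans hum)
          rw [hmq] at hum
          exact absurd hum.symm (ne_of_lt hdq)
      have hres := hqmin' m hmk (by rw [hum]; exact h)
        (by rw [hum]; exact le_trans (le_of_lt hdq) hbc) hvm
      rw [hum] at hres
      exact absurd hres (not_le.mpr hdq)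
    -- Step 6: no intermediate r
    have hnr : ¬∃ r : Fin n, p < r ∧ r < q ∧ u p < u r ∧ u r < u q := by
      rintro ⟨r, hpr, hrq, h1r, h2r⟩
      rcases lt_or_ge (r : ℕ) k with hrk | hrk
      · have hur : u r = v r := by
          rcases lt_or_eq_of_le (hu1 r hrk) with hlt | heq2
          · exact absurd (hpmax' r hrk hlt) (not_le.mpr h1r)
          · exact heq2
        have hvv := hu3 p r hpr (Or.inl hrk) h1r
        rw [← hur] at hvv
        exact absurd ((hvv.trans h2r).trans_le hbc) (lt_irrefl _)
      · have hur : u r = v r := by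
          rcases lt_or_eq_of_le (hu2 r hrk) with hlt | heq2
          · exact absurd (hqmin' r hrk h1r (le_trans h2r.le hbc) hlt) (not_le.mpr h2r)
          · exact heq2.symm
        have hvv := hu3 r q hrq (Or.inr hrk) h2r
        rw [← hur] at hvv
        exact absurd ((hvv.trans_le hda).trans h1r) (lt_irrefl _)
    -- Step 7: z = u * swap p q is between u and v, hence equals v
    have hzuz := kBruhat_swap_right (u := u) hp hq hab hnr
    set z := u * Equiv.swap p q with hz
    have hzp : z p = u q := by simp [hz, Equiv.Perm.mul_apply]
    have hzq : z q = u p := by simp [hz, Equiv.Perm.mul_apply]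
    have hzo : ∀ i : Fin n, p ≠ i → q ≠ i → z i = u i := fun i a b => by
      simp [hz, Equiv.Perm.mul_apply, Equiv.swap_apply_of_ne_of_ne a.symm b.symm]
    have hzv : kBruhat n k z v := by
      refine ⟨?_, ?_, ?_⟩
      · intro i hi
        rcases eq_or_ne p i with rfl | hip
        · rw [hzp]; exact hbc
        · rw [hzo i hip (by rintro rfl; omega)]; exact hu1 i hi
      · intro j hj
        rcases eq_or_ne q j with rfl | hjq
        · rw [hzq]; exact hda
        · rw [hzo j (by rintro rfl; omega) hjq]; exact hu2 j hj
      · intro i j hij hblk hzlt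
        rcases hblk with hb | hb
        · have hiq : q ≠ i := by rintro rfl; have := Fin.lt_def.mp hij; omega
          have hjq : q ≠ j := by rintro rfl; omega
          rcases eq_or_ne p i with rfl | hip
          · -- i = p : z p = u q < u j
            have hjp : p ≠ j := ne_of_lt hij
            rw [hzp, hzo j hjp hjq] at hzlt
            exact hu3 p j hij (Or.inl hb) (hab.trans hzlt)
          · rcases eq_or_ne p j with rfl | hjp
            · -- j = p : u i < u q, show v i < v p
              rw [hzo i hip hiq, hzp] at hzlt
              rcases lt_trichotomy (v i) (v p) with h | h | h
              · exact h
              · exact absurd (v.injective h).symm hip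
              · exfalso
                have hui : ¬ u i < u p := fun hc =>
                  absurd (hu3 i p hij (Or.inl hb) hc) (not_lt.mpr h.le)
                have hup : u p < u i :=
                  lt_of_le_of_ne (not_lt.mp hui) (fun hc => hip (u.injective hc))
                have hik : (i : ℕ) < k := lt_trans (Fin.lt_def.mp hij) hb
                have hur : u i = v i := by
                  rcases lt_or_eq_of_le (hu1 i hik) with hlt | heq2
                  · exact absurd (hpmax' i hik hlt) (not_le.mpr hup)
                  · exact heq2
                rw [← hur] at h
                exact absurd ((h.trans hzlt).trans_le hbc) (lt_irrefl _)
            · rw [hzo i hip hiq, hzo j hjp hjq] at hzlt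
              exact hu3 i j hij (Or.inl hb) hzlt
        · have hip : p ≠ i := by rintro rfl; omega
          have hjp : p ≠ j := by rintro rfl; have := Fin.lt_def.mp hij; omega
          rcases eq_or_ne q i with rfl | hiq
          · -- i = q : z q = u p < u j, show v q < v j
            have hjq : q ≠ j := ne_of_lt hij
            rw [hzq, hzo j hjp hjq] at hzlt
            rcases lt_trichotomy (u j) (u q) with h | h | h
            · have hjk : k ≤ (j : ℕ) := by have := Fin.lt_def.mp hij; omega
              have hur : u j = v j := by
                rcases lt_or_eq_of_le (hu2 j hjk) with hlt | heq2
                · exact absurd (hqmin' j hjk hzlt (le_trans h.le hbc) hlt) (not_le.mpr h)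
                · exact heq2.symm
              rw [← hur]
              exact lt_of_le_of_lt hda hzlt
            · exact absurd (u.injective h).symm hjq
            · exact hu3 q j hij (Or.inr hb) h
          · rcases eq_or_ne q j with rfl | hjq
            · rw [hzo i hip hiq, hzq] at hzlt
              exact hu3 i q hij (Or.inr hb) (hzlt.trans hab)
            · rw [hzo i hip hiq, hzo j hjp hjq] at hzlt
              exact hu3 i j hij (Or.inr hb) hzlt
    rcases hmin z hzuz hzv with hzu | hzv'
    · exfalso
      have hzz : z p = u p := by rw [hzu]
      rw [hzp] at hzz
      exact (ne_of_lt hab) hzz.symm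
    · exact ⟨p, q, hp, hq, hzv'.symm, hab, hnr⟩
  · rintro ⟨p, q, hp, hq, hv, hab, hnr⟩
    subst hv
    refine ⟨kBruhat_swap_right hp hq hab hnr, ?_, ?_⟩
    · intro h
      have hpp : u p = (u * Equiv.swap p q) p := by rw [← h]
      simp only [Equiv.Perm.mul_apply, Equiv.swap_apply_left] at hpp
      exact (ne_of_lt hab) hpp
    · intro z hz1 hz2
      exact kBruhat_sandwich hp hq hz1 hz2
end

section
/- For any f ∈ CB(k,n), the equality c·u_f·w_f^{-1} = u_{χ(f)}·w_{χ(f)}^{-1}·c holds in S_n, where c = (1,2,…,n) is the long cycle [2,3,…,n,1]. -/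
/-- The cyclic shift `χ(f)(i) = f(i−1) + 1`. -/
def Chi (f : ℤ → ℤ) : ℤ → ℤ := fun i => f (i - 1) + 1

/-!
Reducing `f = u·t_k·w⁻¹` modulo `n` kills `t_k`, so `u·w⁻¹` is the permutation `j ↦ f(j+1) - 1`
of residues, for any pair `(w, u)` related to `f`. Conjugating by the long cycle `c` is the shift
`j ↦ j + 1` of residues, and `χ(f)` is `f` conjugated by that shift; since `f(i + n) = f(i) + n`,
the residue of `f(i)` only depends on that of `i`.
-/

lemma Fin.natCast_zmod_injective (n : ℕ) :
    Function.Injective fun j : Fin n => ((j : ℕ) : ZMod n) := by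
  intro a b h
  have := congrArg ZMod.val h
  simp only [ZMod.val_cast_of_lt a.isLt, ZMod.val_cast_of_lt b.isLt] at this
  exact Fin.ext this

lemma natCast_finRotate_apply {n : ℕ} (j : Fin n) :
    ((finRotate n j : ℕ) : ZMod n) = (j : ℕ) + 1 := by
  cases n with
  | zero => exact j.elim0
  | succ m =>
    rw [finRotate_apply, Fin.val_add, Fin.val_one']
    push_cast [ZMod.natCast_mod]
    rfl

lemma rel.natCast_apply_inv {n k : ℕ} {w u : Equiv.Perm (Fin n)} {f : ℤ → ℤ}
    (h : rel n k w u f) (j : Fin n) :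
    ((u (w⁻¹ j) : ℕ) : ZMod n) = ((f ((j : ℕ) + 1) - 1 : ℤ) : ZMod n) := by
  have hj := h (w⁻¹ j)
  rw [Equiv.Perm.coe_inv, Equiv.apply_symm_apply] at hj
  rw [hj]
  push_cast
  split <;> simp

lemma map_add_mul_of_map_add {n : ℕ} {f : ℤ → ℤ} (hper : ∀ i, f (i + n) = f i + n) (a t : ℤ) :
    f (a + n * t) = f a + n * t := by
  induction t using Int.induction_on with
  | zero => simp
  | succ t ih => rw [mul_add_one, ← add_assoc, hper, ih]; ring
  | pred t ih =>
    have := hper (a + n * (-t - 1))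
    rw [show a + n * (-t - 1) + n = a + n * -t by ring, ih] at this
    linarith

lemma intCast_map_congr_of_map_add {n : ℕ} {f : ℤ → ℤ} (hper : ∀ i, f (i + n) = f i + n)
    {a b : ℤ} (hab : (a : ZMod n) = b) : (f a : ZMod n) = f b := by
  obtain ⟨t, ht⟩ := (ZMod.intCast_eq_intCast_iff_dvd_sub a b n).1 hab
  rw [ZMod.intCast_eq_intCast_iff_dvd_sub, show b = a + n * t by linarith,
    map_add_mul_of_map_add hper]
  simp

theorem cyclic_shift_conjugation_general (n k : ℕ)
    (f : ℤ → ℤ) (hf : CBmem n k f)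
    (wf uf wg ug : Equiv.Perm (Fin n))
    (huf : rel n k wf uf f) (hug : rel n k wg ug (Chi f)) :
    finRotate n * uf * wf⁻¹ = ug * wg⁻¹ * finRotate n := by
  ext j
  refine congrArg Fin.val (Fin.natCast_zmod_injective n ?_)
  have hshift : (((finRotate n j : ℕ) : ℤ) : ZMod n) = (((j : ℕ) + 1 : ℤ) : ZMod n) := by
    push_cast; exact natCast_finRotate_apply j
  calc ((finRotate n (uf (wf⁻¹ j)) : ℕ) : ZMod n)
      = ((f ((j : ℕ) + 1) : ℤ) : ZMod n) := by
        rw [natCast_finRotate_apply, huf.natCast_apply_inv]; push_cast; ring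
    _ = ((f (finRotate n j : ℕ) : ℤ) : ZMod n) :=
        intCast_map_congr_of_map_add hf.2.1 hshift.symm
    _ = ((ug (wg⁻¹ (finRotate n j)) : ℕ) : ZMod n) := by
        rw [hug.natCast_apply_inv, Chi, add_sub_cancel_right, add_sub_cancel_right]

/-- For any `f ∈ CB(k,n)`, with `w_f, u_f` and `w_{χ(f)}, u_{χ(f)}` the
associated Grassmannian permutations and `k`-Bruhat elements, the equality
`c·u_f·w_f⁻¹ = u_{χ(f)}·w_{χ(f)}⁻¹·c` holds in `Sₙ`, where `c` is the long
cycle `[2,3,…,n,1]`. -/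
theorem cyclic_shift_conjugation (n k : ℕ) (hn : 1 ≤ n) (hk : k ≤ n)
    (f : ℤ → ℤ) (hf : CBmem n k f)
    (L Lc : Finset (Fin n))
    (hLf : ∀ i : Fin n, ((n : ℤ) < f (((i : ℕ) : ℤ) + 1) ↔ i ∈ L))
    (hLc : ∀ i : Fin n, ((n : ℤ) < Chi f (((i : ℕ) : ℤ) + 1) ↔ i ∈ Lc))
    (wf uf wg ug : Equiv.Perm (Fin n))
    (hwf : Grassmannian n k wf)
    (hwfL : (Finset.univ.filter (fun i : Fin n => (i : ℕ) < k)).image wf = L)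
    (hwg : Grassmannian n k wg)
    (hwgL : (Finset.univ.filter (fun i : Fin n => (i : ℕ) < k)).image wg = Lc)
    (huf : rel n k wf uf f) (hug : rel n k wg ug (Chi f)) :
    finRotate n * uf * wf⁻¹ = ug * wg⁻¹ * finRotate n :=
  cyclic_shift_conjugation_general n k f hf wf uf wg ug huf hug
end

section
/- In CB(2,3), the sum over all maximal chains of the product of edge weights equals (α_1 + α_2 + α_3)², where the weight of a cover f·t_{ij} ⋖ f is α_i + ⋯ + α_{j−1} taken in cyclic order (i.e., α_i + ⋯ + α_{j−1} if i < j, and α_i + ⋯ + α_n + α_1 + ⋯ + α_{j−1} if i > j). -/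
open Classical

/-- The reflection `t_{ij}`: for `i < j` the transposition of the residue
classes of `i` and `j`; for `i > j` the affine reflection with `t(j) = i − n`
and `t(i) = j + n`, extended `n`-periodically. -/
def tAff (n : ℕ) (i j : ℤ) : ℤ → ℤ := fun a =>
  if (a - i) % n = 0 then a + (j - i) + (if i < j then 0 else n)
  else if (a - j) % n = 0 then a + (i - j) - (if i < j then 0 else n)
  else a

/-- A cover `g ⋖ f` in `CB(k,n)`: `g = f·t_{ij}` for some `i ≠ j` in `[1,n]`
with `ℓ(g) = ℓ(f) + 1`. -/
def covCB (n : ℕ) (f g : ℤ → ℤ) : Prop :=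
  ∃ i j : ℤ, 1 ≤ i ∧ i ≤ n ∧ 1 ≤ j ∧ j ≤ n ∧ i ≠ j ∧
    g = f ∘ tAff n i j ∧ alen n g = alen n f + 1

/-- The indeterminate `α_m`, indexed cyclically modulo `3`. -/
noncomputable def alpha3 {R : Type*} [CommRing R] (a1 a2 a3 : R) (m : ℤ) : R :=
  if m % 3 = 1 then a1 else if m % 3 = 2 then a2 else a3

/-- The weight of a covering by `t_{ij}` in `CB(2,3)`: the cyclic sum of
`α_i` through `α_{j−1}` (`α_i + ⋯ + α_{j−1}` for `i < j`, and
`α_i + ⋯ + α_3 + α_1 + ⋯ + α_{j−1}` for `i > j`). -/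
noncomputable def wt3 {R : Type*} [CommRing R] (a1 a2 a3 : R) (i j : ℤ) : R :=
  if i < j then ∑ r ∈ Finset.Ico i j, alpha3 a1 a2 a3 r
  else ∑ r ∈ Finset.Ico i (j + 3), alpha3 a1 a2 a3 r

/-- The weight of the cover `g ⋖ f` in `CB(2,3)` (and `0` if `g` is not
covered by `f`): the weight `wt3 i j` of the unique reflection `t_{ij}` with
`g = f·t_{ij}` and `ℓ(g) = ℓ(f) + 1`. -/
noncomputable def covWt3 {R : Type*} [CommRing R] (a1 a2 a3 : R) (f g : ℤ → ℤ) : R :=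
  ∑ i ∈ Finset.Icc (1 : ℤ) 3, ∑ j ∈ Finset.Icc (1 : ℤ) 3,
    if i ≠ j ∧ g = f ∘ tAff 3 i j ∧ alen 3 g = alen 3 f + 1
    then wt3 a1 a2 a3 i j else 0

/-!
`CB(2,3)` is small enough to enumerate. Every bounded affine permutation of period 3 is
determined by its window `[f 1, f 2, f 3]`; right multiplication by `t_{ij}` swaps two window
entries (shifting them by `∓3` when `i > j`), and boundedness is a box condition on the window.
Hence the lower covers of `[3,4,5]` are `[4,3,5]`, `[3,5,4]`, `[2,4,6]`, each of which is
covered by exactly two elements of length 2, and the reflection realising a cover is unique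
because `f` is injective and the six `t_{ij}` are distinct. The six maximal chains have weights
`α₁α₂, α₁(α₃+α₁), α₂(α₁+α₂), α₂α₃, α₃α₁, α₃(α₂+α₃)`, which sum to `(α₁+α₂+α₃)²`.
-/

open Finset

lemma finsum_finsum_ite_eq_sum {α β M : Type*} [AddCommMonoid M] {P : α → β → Prop}
    [∀ a b, Decidable (P a b)] (s : Finset (α × β)) (hP : ∀ a b, P a b ↔ (a, b) ∈ s)
    (F : α → β → M) :
    ∑ᶠ (a) (b), (if P a b then F a b else 0) = ∑ p ∈ s, F p.1 p.2 := by
  have hsupp : Function.support (fun p : α × β => if P p.1 p.2 then F p.1 p.2 else 0) ⊆ s :=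
    Function.support_subset_iff'.2 fun p hp => if_neg fun h => hp ((hP _ _).1 h)
  rw [← finsum_curry _ (s.finite_toSet.subset hsupp), finsum_eq_sum_of_support_subset _ hsupp]
  exact sum_congr rfl fun p hp => if_pos ((hP _ _).2 hp)

lemma alen_eq_card_filter {n : ℕ} {f : ℤ → ℤ} (hf : ∀ a, a ≤ f a ∧ f a ≤ a + n) :
    alen n f = ((Icc 1 (n : ℤ) ×ˢ Icc 1 (2 * n : ℤ)).filter
      fun p => p.1 < p.2 ∧ f p.2 < f p.1).card := by
  -- an inversion `(p, q)` has `q ≤ f q < f p ≤ p + n ≤ 2n`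
  rw [alen, ← Set.ncard_coe_finset]
  congr 1
  ext ⟨p, q⟩
  simp only [Set.mem_ofPred_eq, coe_filter, mem_product, mem_Icc]
  constructor
  · rintro ⟨hp₁, hpn, hpq, hf'⟩
    have := hf p
    have := hf q
    omega
  · rintro ⟨⟨⟨hp₁, hpn⟩, -⟩, hpq, hf'⟩
    exact ⟨hp₁, hpn, hpq, hf'⟩

lemma tAff_three_inj {i j i' j' : ℤ} (hi : i ∈ Icc 1 3) (hj : j ∈ Icc 1 3) (hi' : i' ∈ Icc 1 3)
    (hj' : j' ∈ Icc 1 3) (hij : i ≠ j) (hij' : i' ≠ j') (h : tAff 3 i j = tAff 3 i' j') :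
    i = i' ∧ j = j' := by
  have onWindow : ∀ i ∈ Icc (1 : ℤ) 3, ∀ j ∈ Icc (1 : ℤ) 3, ∀ i' ∈ Icc (1 : ℤ) 3,
      ∀ j' ∈ Icc (1 : ℤ) 3, i ≠ j → i' ≠ j' → tAff 3 i j 1 = tAff 3 i' j' 1 →
        tAff 3 i j 2 = tAff 3 i' j' 2 → tAff 3 i j 3 = tAff 3 i' j' 3 → i = i' ∧ j = j' := by
    decide
  exact onWindow i hi j hj i' hi' j' hj' hij hij' (congrFun h 1) (congrFun h 2) (congrFun h 3)

def CoversVia (n : ℕ) (f g : ℤ → ℤ) (i j : ℤ) : Prop :=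
  1 ≤ i ∧ i ≤ n ∧ 1 ≤ j ∧ j ≤ n ∧ i ≠ j ∧ g = f ∘ tAff n i j ∧ alen n g = alen n f + 1

lemma CoversVia.covCB {n : ℕ} {f g : ℤ → ℤ} {i j : ℤ} (h : CoversVia n f g i j) : covCB n f g :=
  ⟨i, j, h⟩

lemma CoversVia.covWt3_eq {R : Type*} [CommRing R] (a1 a2 a3 : R) {f g : ℤ → ℤ} {i j : ℤ}
    (hf : Function.Injective f) (h : CoversVia 3 f g i j) :
    covWt3 a1 a2 a3 f g = wt3 a1 a2 a3 i j := by
  obtain ⟨hi₁, hi₃, hj₁, hj₃, hij, rfl, hlen⟩ := h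
  have hi : i ∈ Icc (1 : ℤ) 3 := mem_Icc.2 ⟨hi₁, hi₃⟩
  have hj : j ∈ Icc (1 : ℤ) 3 := mem_Icc.2 ⟨hj₁, hj₃⟩
  have unique : ∀ i' ∈ Icc (1 : ℤ) 3, ∀ j' ∈ Icc (1 : ℤ) 3,
      i' ≠ j' ∧ f ∘ tAff 3 i j = f ∘ tAff 3 i' j' → i = i' ∧ j = j' :=
    fun i' hi' j' hj' ⟨hij', heq⟩ => tAff_three_inj hi hj hi' hj' hij hij' (hf.comp_left heq)
  rw [covWt3, sum_eq_single i, sum_eq_single j, if_pos ⟨hij, rfl, hlen⟩]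
  · exact fun j' hj' hne => if_neg fun h => hne (unique i hi j' hj' ⟨h.1, h.2.1⟩).2.symm
  · exact fun hj' => absurd hj hj'
  · exact fun i' hi' hne => sum_eq_zero fun j' hj' =>
      if_neg fun h => hne (unique i' hi' j' hj' ⟨h.1, h.2.1⟩).1.symm
  · exact fun hi' => absurd hi hi'

/-- The affine permutation of period 3 with window `[w₁, w₂, w₃]` (the paper's notation),
i.e. `a ↦ a - r + w_r` for `a ≡ r (mod 3)`, `r ∈ {1, 2, 3}`. -/
def window3 (w₁ w₂ w₃ : ℤ) : ℤ → ℤ := fun a =>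
  a + if a % 3 = 1 then w₁ - 1 else if a % 3 = 2 then w₂ - 2 else w₃ - 3

section Window

variable {w₁ w₂ w₃ : ℤ}

lemma window3_inj {v₁ v₂ v₃ : ℤ} :
    window3 w₁ w₂ w₃ = window3 v₁ v₂ v₃ ↔ w₁ = v₁ ∧ w₂ = v₂ ∧ w₃ = v₃ := by
  refine ⟨fun h => ?_, by rintro ⟨rfl, rfl, rfl⟩; rfl⟩
  have h₁ := congrFun h 1
  have h₂ := congrFun h 2
  have h₃ := congrFun h 3
  norm_num [window3] at h₁ h₂ h₃
  omega

lemma top_eq_window3 : (fun a : ℤ => a + 2) = window3 3 4 5 := by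
  funext a; simp only [window3]; split_ifs <;> omega

lemma window3_add_three (a : ℤ) : window3 w₁ w₂ w₃ (a + 3) = window3 w₁ w₂ w₃ a + 3 := by
  simp only [window3, Int.add_emod_right]; split_ifs <;> omega

lemma window3_bounded_iff :
    (∀ a, a ≤ window3 w₁ w₂ w₃ a ∧ window3 w₁ w₂ w₃ a ≤ a + 3) ↔
      1 ≤ w₁ ∧ w₁ ≤ 4 ∧ 2 ≤ w₂ ∧ w₂ ≤ 5 ∧ 3 ≤ w₃ ∧ w₃ ≤ 6 := by
  constructor
  · intro h
    have h₁ := h 1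
    have h₂ := h 2
    have h₃ := h 3
    norm_num [window3] at h₁ h₂ h₃
    omega
  · intro hw a
    simp only [window3]; split_ifs <;> omega

lemma window3_bijective (h₁₂ : w₁ % 3 ≠ w₂ % 3) (h₁₃ : w₁ % 3 ≠ w₃ % 3) (h₂₃ : w₂ % 3 ≠ w₃ % 3) :
    Function.Bijective (window3 w₁ w₂ w₃) := by
  refine ⟨fun a b hab => ?_, fun b => ?_⟩
  · simp only [window3] at hab; split_ifs at hab <;> omega
  · have : b % 3 = w₁ % 3 ∨ b % 3 = w₂ % 3 ∨ b % 3 = w₃ % 3 := by omega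
    rcases this with h | h | h
    · exact ⟨b - w₁ + 1, by simp only [window3]; split_ifs <;> omega⟩
    · exact ⟨b - w₂ + 2, by simp only [window3]; split_ifs <;> omega⟩
    · exact ⟨b - w₃ + 3, by simp only [window3]; split_ifs <;> omega⟩

lemma CBmem.window3_bounds (h : CBmem 3 2 (window3 w₁ w₂ w₃)) :
    1 ≤ w₁ ∧ w₁ ≤ 4 ∧ 2 ≤ w₂ ∧ w₂ ≤ 5 ∧ 3 ≤ w₃ ∧ w₃ ≤ 6 :=
  window3_bounded_iff.1 h.2.2.1

lemma cbmem_window3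
    (h : (1 ≤ w₁ ∧ w₁ ≤ 4 ∧ 2 ≤ w₂ ∧ w₂ ≤ 5 ∧ 3 ≤ w₃ ∧ w₃ ≤ 6) ∧
      (w₁ % 3 ≠ w₂ % 3 ∧ w₁ % 3 ≠ w₃ % 3 ∧ w₂ % 3 ≠ w₃ % 3) ∧ w₁ + w₂ + w₃ = 12) :
    CBmem 3 2 (window3 w₁ w₂ w₃) := by
  obtain ⟨hbd, ⟨h₁₂, h₁₃, h₂₃⟩, hsum⟩ := h
  refine ⟨window3_bijective h₁₂ h₁₃ h₂₃, window3_add_three, window3_bounded_iff.2 hbd, ?_⟩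
  rw [show Finset.Icc (1 : ℤ) (3 : ℕ) = {1, 2, 3} by decide, sum_insert (by decide),
    sum_insert (by decide), sum_singleton]
  simp only [window3]
  norm_num
  omega

lemma window3_comp_tAff_one_two : window3 w₁ w₂ w₃ ∘ tAff 3 1 2 = window3 w₂ w₁ w₃ := by
  funext a; simp only [window3, tAff, Function.comp_apply]; push_cast; split_ifs <;> omega

lemma window3_comp_tAff_two_three : window3 w₁ w₂ w₃ ∘ tAff 3 2 3 = window3 w₁ w₃ w₂ := by
  funext a; simp only [window3, tAff, Function.comp_apply]; push_cast; split_ifs <;> omega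

lemma window3_comp_tAff_one_three : window3 w₁ w₂ w₃ ∘ tAff 3 1 3 = window3 w₃ w₂ w₁ := by
  funext a; simp only [window3, tAff, Function.comp_apply]; push_cast; split_ifs <;> omega

lemma window3_comp_tAff_two_one :
    window3 w₁ w₂ w₃ ∘ tAff 3 2 1 = window3 (w₂ - 3) (w₁ + 3) w₃ := by
  funext a; simp only [window3, tAff, Function.comp_apply]; push_cast; split_ifs <;> omega

lemma window3_comp_tAff_three_two :
    window3 w₁ w₂ w₃ ∘ tAff 3 3 2 = window3 w₁ (w₃ - 3) (w₂ + 3) := by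
  funext a; simp only [window3, tAff, Function.comp_apply]; push_cast; split_ifs <;> omega

lemma window3_comp_tAff_three_one :
    window3 w₁ w₂ w₃ ∘ tAff 3 3 1 = window3 (w₃ - 3) w₂ (w₁ + 3) := by
  funext a; simp only [window3, tAff, Function.comp_apply]; push_cast; split_ifs <;> omega

lemma eq_window3_of_covCB {g : ℤ → ℤ} (h : covCB 3 (window3 w₁ w₂ w₃) g) :
    g = window3 w₂ w₁ w₃ ∨ g = window3 w₁ w₃ w₂ ∨ g = window3 w₃ w₂ w₁ ∨
      g = window3 (w₂ - 3) (w₁ + 3) w₃ ∨ g = window3 w₁ (w₃ - 3) (w₂ + 3) ∨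
      g = window3 (w₃ - 3) w₂ (w₁ + 3) := by
  obtain ⟨i, j, hi₁, hi₃, hj₁, hj₃, hij, rfl, -⟩ := h
  push_cast at hi₃ hj₃
  interval_cases i <;> interval_cases j <;> first
    | exact absurd rfl hij
    | simp only [window3_comp_tAff_one_two, window3_comp_tAff_two_three,
        window3_comp_tAff_one_three, window3_comp_tAff_two_one, window3_comp_tAff_three_two,
        window3_comp_tAff_three_one, true_or, or_true]

end Window

lemma alen_window3 {w₁ w₂ w₃ : ℤ} (hw : 1 ≤ w₁ ∧ w₁ ≤ 4 ∧ 2 ≤ w₂ ∧ w₂ ≤ 5 ∧ 3 ≤ w₃ ∧ w₃ ≤ 6) :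
    alen 3 (window3 w₁ w₂ w₃) = ((Icc 1 3 ×ˢ Icc 1 6).filter
      fun p => p.1 < p.2 ∧ window3 w₁ w₂ w₃ p.2 < window3 w₁ w₂ w₃ p.1).card :=
  alen_eq_card_filter (window3_bounded_iff.2 hw)

lemma alen_345 : alen 3 (window3 3 4 5) = 0 := by rw [alen_window3 (by norm_num)]; decide
lemma alen_435 : alen 3 (window3 4 3 5) = 1 := by rw [alen_window3 (by norm_num)]; decide
lemma alen_354 : alen 3 (window3 3 5 4) = 1 := by rw [alen_window3 (by norm_num)]; decide
lemma alen_246 : alen 3 (window3 2 4 6) = 1 := by rw [alen_window3 (by norm_num)]; decide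
lemma alen_453 : alen 3 (window3 4 5 3) = 2 := by rw [alen_window3 (by norm_num)]; decide
lemma alen_426 : alen 3 (window3 4 2 6) = 2 := by rw [alen_window3 (by norm_num)]; decide
lemma alen_156 : alen 3 (window3 1 5 6) = 2 := by rw [alen_window3 (by norm_num)]; decide

lemma coversVia_345_435 : CoversVia 3 (window3 3 4 5) (window3 4 3 5) 1 2 :=
  ⟨by norm_num, by norm_num, by norm_num, by norm_num, by norm_num,
    window3_comp_tAff_one_two.symm, by rw [alen_345, alen_435]⟩
lemma coversVia_345_354 : CoversVia 3 (window3 3 4 5) (window3 3 5 4) 2 3 :=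
  ⟨by norm_num, by norm_num, by norm_num, by norm_num, by norm_num,
    window3_comp_tAff_two_three.symm, by rw [alen_345, alen_354]⟩
lemma coversVia_345_246 : CoversVia 3 (window3 3 4 5) (window3 2 4 6) 3 1 :=
  ⟨by norm_num, by norm_num, by norm_num, by norm_num, by norm_num,
    by rw [window3_comp_tAff_three_one]; norm_num, by rw [alen_345, alen_246]⟩
lemma coversVia_435_453 : CoversVia 3 (window3 4 3 5) (window3 4 5 3) 2 3 :=
  ⟨by norm_num, by norm_num, by norm_num, by norm_num, by norm_num,
    window3_comp_tAff_two_three.symm, by rw [alen_435, alen_453]⟩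
lemma coversVia_435_426 : CoversVia 3 (window3 4 3 5) (window3 4 2 6) 3 2 :=
  ⟨by norm_num, by norm_num, by norm_num, by norm_num, by norm_num,
    by rw [window3_comp_tAff_three_two]; norm_num, by rw [alen_435, alen_426]⟩
lemma coversVia_354_453 : CoversVia 3 (window3 3 5 4) (window3 4 5 3) 1 3 :=
  ⟨by norm_num, by norm_num, by norm_num, by norm_num, by norm_num,
    window3_comp_tAff_one_three.symm, by rw [alen_354, alen_453]⟩
lemma coversVia_354_156 : CoversVia 3 (window3 3 5 4) (window3 1 5 6) 3 1 :=
  ⟨by norm_num, by norm_num, by norm_num, by norm_num, by norm_num,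
    by rw [window3_comp_tAff_three_one]; norm_num, by rw [alen_354, alen_156]⟩
lemma coversVia_246_426 : CoversVia 3 (window3 2 4 6) (window3 4 2 6) 1 2 :=
  ⟨by norm_num, by norm_num, by norm_num, by norm_num, by norm_num,
    window3_comp_tAff_one_two.symm, by rw [alen_246, alen_426]⟩
lemma coversVia_246_156 : CoversVia 3 (window3 2 4 6) (window3 1 5 6) 2 1 :=
  ⟨by norm_num, by norm_num, by norm_num, by norm_num, by norm_num,
    by rw [window3_comp_tAff_two_one]; norm_num, by rw [alen_246, alen_156]⟩

noncomputable def maxChains : Finset ((ℤ → ℤ) × (ℤ → ℤ)) :=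
  {(window3 4 3 5, window3 4 5 3), (window3 4 3 5, window3 4 2 6),
   (window3 3 5 4, window3 4 5 3), (window3 3 5 4, window3 1 5 6),
   (window3 2 4 6, window3 4 2 6), (window3 2 4 6, window3 1 5 6)}

lemma mem_maxChains_iff {g h : ℤ → ℤ} :
    (g, h) ∈ maxChains ↔
      CBmem 3 2 g ∧ CBmem 3 2 h ∧ covCB 3 (window3 3 4 5) g ∧ covCB 3 g h ∧ alen 3 h = 2 := by
  constructor
  · simp only [maxChains, mem_insert, mem_singleton, Prod.mk.injEq]
    rintro (⟨rfl, rfl⟩ | ⟨rfl, rfl⟩ | ⟨rfl, rfl⟩ | ⟨rfl, rfl⟩ | ⟨rfl, rfl⟩ | ⟨rfl, rfl⟩)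
    · exact ⟨cbmem_window3 (by decide), cbmem_window3 (by decide), coversVia_345_435.covCB,
        coversVia_435_453.covCB, alen_453⟩
    · exact ⟨cbmem_window3 (by decide), cbmem_window3 (by decide), coversVia_345_435.covCB,
        coversVia_435_426.covCB, alen_426⟩
    · exact ⟨cbmem_window3 (by decide), cbmem_window3 (by decide), coversVia_345_354.covCB,
        coversVia_354_453.covCB, alen_453⟩
    · exact ⟨cbmem_window3 (by decide), cbmem_window3 (by decide), coversVia_345_354.covCB,
        coversVia_354_156.covCB, alen_156⟩
    · exact ⟨cbmem_window3 (by decide), cbmem_window3 (by decide), coversVia_345_246.covCB,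
        coversVia_246_426.covCB, alen_426⟩
    · exact ⟨cbmem_window3 (by decide), cbmem_window3 (by decide), coversVia_345_246.covCB,
        coversVia_246_156.covCB, alen_156⟩
  · -- discard the reflections leaving the box of bounded windows, and `h = [3,4,5]` (length 0)
    rintro ⟨hg, hh, hcovg, hcovh, hlen⟩
    rcases eq_window3_of_covCB hcovg with rfl | rfl | rfl | rfl | rfl | rfl
    all_goals first
      | (have := hg.window3_bounds; omega)
      | rcases eq_window3_of_covCB hcovh with rfl | rfl | rfl | rfl | rfl | rfl
    all_goals first
      | (have := hh.window3_bounds; omega)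
      | (simp [maxChains, window3_inj]; done)
      | norm_num [alen_345] at hlen

section Weights

variable {R : Type*} [CommRing R] (a1 a2 a3 : R)

lemma wt3_one_two : wt3 a1 a2 a3 1 2 = a1 := by
  simp [wt3, alpha3, show Ico (1 : ℤ) 2 = {1} by decide]
lemma wt3_two_three : wt3 a1 a2 a3 2 3 = a2 := by
  simp [wt3, alpha3, show Ico (2 : ℤ) 3 = {2} by decide]
lemma wt3_one_three : wt3 a1 a2 a3 1 3 = a1 + a2 := by
  simp [wt3, alpha3, show Ico (1 : ℤ) 3 = {1, 2} by decide]
lemma wt3_two_one : wt3 a1 a2 a3 2 1 = a2 + a3 := by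
  simp [wt3, alpha3, show Ico (2 : ℤ) 4 = {2, 3} by decide]
lemma wt3_three_two : wt3 a1 a2 a3 3 2 = a3 + a1 := by
  simp [wt3, alpha3, show Ico (3 : ℤ) 5 = {3, 4} by decide]
lemma wt3_three_one : wt3 a1 a2 a3 3 1 = a3 := by
  simp [wt3, alpha3, show Ico (3 : ℤ) 4 = {3} by decide]

end Weights

/-- In `CB(2,3)`, whose top element is `f_top = [3,4,5]` (`f i = i + 2`) and
whose minimal elements have length `2 = k(n−k)`, the sum over all maximal
chains `f_top ⋗ g ⋗ h` of the products of the edge weights equals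
`(α₁ + α₂ + α₃)²`. -/
theorem cb23_weighted_chain_sum {R : Type*} [CommRing R] (a1 a2 a3 : R) :
    (∑ᶠ (g : ℤ → ℤ) (h : ℤ → ℤ),
      if CBmem 3 2 g ∧ CBmem 3 2 h ∧
          covCB 3 (fun i => i + 2) g ∧ covCB 3 g h ∧ alen 3 h = 2
      then covWt3 a1 a2 a3 (fun i => i + 2) g * covWt3 a1 a2 a3 g h
      else 0) = (a1 + a2 + a3) ^ 2 := by
  rw [top_eq_window3, finsum_finsum_ite_eq_sum maxChains fun _ _ => mem_maxChains_iff.symm]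
  simp only [maxChains]
  rw [sum_insert (by simp [window3_inj]), sum_insert (by simp [window3_inj]),
    sum_insert (by simp [window3_inj]), sum_insert (by simp [window3_inj]),
    sum_insert (by simp [window3_inj]), sum_singleton]
  have inj_345 : Function.Injective (window3 3 4 5) := (cbmem_window3 (by decide)).1.1
  have inj_435 : Function.Injective (window3 4 3 5) := (cbmem_window3 (by decide)).1.1
  have inj_354 : Function.Injective (window3 3 5 4) := (cbmem_window3 (by decide)).1.1
  have inj_246 : Function.Injective (window3 2 4 6) := (cbmem_window3 (by decide)).1.1
  rw [coversVia_345_435.covWt3_eq _ _ _ inj_345, coversVia_345_354.covWt3_eq _ _ _ inj_345,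
    coversVia_345_246.covWt3_eq _ _ _ inj_345, coversVia_435_453.covWt3_eq _ _ _ inj_435,
    coversVia_435_426.covWt3_eq _ _ _ inj_435, coversVia_354_453.covWt3_eq _ _ _ inj_354,
    coversVia_354_156.covWt3_eq _ _ _ inj_354, coversVia_246_426.covWt3_eq _ _ _ inj_246,
    coversVia_246_156.covWt3_eq _ _ _ inj_246, wt3_one_two, wt3_two_three, wt3_one_three,
    wt3_two_one, wt3_three_two, wt3_three_one]
  ring
end
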